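/- arXiv:1912.12562 — 3 statements merged into one kernel-verified Lean document; each statement's English description precedes it below -/
import Mathlib

section
/- Let X be a vector space of finite cardinality N (over a finite field). Then the probability that a uniformly random linear operator on X is nilpotent is 1/N; equivalently, N times the number of nilpotent operators on X equals the total number of linear operators on X. -/
/-!
Follow the orbit `e, T e, T² e, …` of a fixed `e ≠ 0` for as long as it stays linearly
independent. Given an independent chain `u₀, …, u_k` with `T uᵢ = uᵢ₊₁`, the value `T u_k` is
unconstrained: if it leaves `Z = span u` the chain grows, otherwise the chain closes. Once closed,
all `|Z|` possible values of `T u_k` occur equally often, but a nilpotent `T` forces `T u_k = 0`;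
then `T` acts nilpotently on `Z`, so it is nilpotent exactly when the induced operator on `V ⧸ Z`
is, which by induction on the dimension happens for a `1 / |V ⧸ Z|` share of them. Each way of
closing a chain thus contributes the ratio `|Z| · |V ⧸ Z| = |V|`.
-/

open Module Set

universe v

instance LinearMap.finite {R M N : Type*} [Semiring R] [AddCommMonoid M] [AddCommMonoid N]
    [Module R M] [Module R N] [Finite M] [Finite N] : Finite (M →ₗ[R] N) :=
  Finite.of_injective _ DFunLike.coe_injective

instance Submodule.Quotient.finite {R M : Type*} [Ring R] [AddCommGroup M] [Module R M] [Finite M]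
    (p : Submodule R M) : Finite (M ⧸ p) :=
  Finite.of_surjective _ p.mkQ_surjective

theorem Nat.card_subtype_eq_sum_card_fiber {α β : Type*} [Finite α] [Fintype β]
    (p : α → Prop) (f : α → β) :
    Nat.card {a // p a} = ∑ b, Nat.card {a // p a ∧ f a = b} := by
  rw [← Nat.card_congr (Equiv.sigmaFiberEquiv fun a : {a // p a} ↦ f a), Nat.card_sigma]
  exact Finset.sum_congr rfl fun b _ ↦
    Nat.card_congr (Equiv.subtypeSubtypeEquivSubtypeInter p (f · = b))

theorem Nat.card_subtype_eq_mul_of_fiber {α β : Type*} [Finite α] [Finite β] (f : α → β)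
    {p q : α → Prop} {c : ℕ}
    (h : ∀ b, Nat.card {a // p a ∧ f a = b} = c * Nat.card {a // q a ∧ f a = b}) :
    Nat.card {a // p a} = c * Nat.card {a // q a} := by
  cases nonempty_fintype β
  rw [Nat.card_subtype_eq_sum_card_fiber p f, Nat.card_subtype_eq_sum_card_fiber q f,
    Finset.mul_sum]
  exact Finset.sum_congr rfl fun b _ ↦ h b

theorem AddMonoidHom.card_preimage_of_surjective {A B : Type*} [AddGroup A] [AddGroup B]
    {f : A →+ B} (hf : Function.Surjective f) (s : Set B) :
    Nat.card (f ⁻¹' s) = Nat.card (AddMonoidHom.ker f) * Nat.card s := by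
  have hg := Function.surjInv_eq hf
  rw [← Nat.card_prod]
  refine Nat.card_congr
    { toFun a := (⟨a - Function.surjInv hf (f a), by simp [hg]⟩, ⟨f a, a.2⟩)
      invFun x := ⟨x.1 + Function.surjInv hf x.2, by simp [hg, (AddMonoidHom.mem_ker).1 x.1.2]⟩
      left_inv a := by simp
      right_inv x := ?_ }
  have hx : f (x.1 + Function.surjInv hf x.2) = x.2 := by
    simp [hg, (AddMonoidHom.mem_ker).1 x.1.2]
  ext <;> simp [hx]

theorem Module.End.isNilpotent_iff_restrict_and_mapQ {R M : Type*} [Ring R] [AddCommGroup M]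
    [Module R M] {f : End R M} {p : Submodule R M} (h : p ≤ p.comap f) :
    IsNilpotent f ↔ IsNilpotent (f.restrict h) ∧ IsNilpotent (p.mapQ p f h) := by
  refine ⟨fun hf ↦ ⟨isNilpotent.restrict h hf, IsNilpotent.mapQ h hf⟩, ?_⟩
  rintro ⟨⟨a, ha⟩, ⟨b, hb⟩⟩
  refine ⟨a + b, LinearMap.ext fun x ↦ ?_⟩
  have hx : (f ^ b) x ∈ p := by
    have := congr($hb (p.mkQ x))
    rwa [← p.mapQ_pow, Submodule.mkQ_apply, Submodule.mapQ_apply, LinearMap.zero_apply,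
      Submodule.Quotient.mk_eq_zero] at this
  have := congr(($ha ⟨_, hx⟩ : M))
  rw [Module.End.pow_restrict, LinearMap.restrict_apply] at this
  simpa [pow_add] using this

namespace Submodule

variable {K V : Type*} [Field K] [AddCommGroup V] [Module K V] (Z : Submodule K V)

def restrictMapQ : Z.compatibleMaps Z →ₗ[K] End K Z × End K (V ⧸ Z) :=
  LinearMap.prod
    { toFun f := f.1.restrict f.2
      map_add' _ _ := rfl
      map_smul' _ _ := rfl }
    (Z.mapQLinear Z)

@[simp]
theorem restrictMapQ_apply (f : Z.compatibleMaps Z) :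
    Z.restrictMapQ f = (f.1.restrict f.2, Z.mapQ Z f.1 f.2) :=
  rfl

theorem restrictMapQ_surjective : Function.Surjective Z.restrictMapQ := by
  rintro ⟨S, N⟩
  obtain ⟨π, hπ⟩ := Z.subtype.exists_leftInverse_of_injective Z.ker_subtype
  obtain ⟨σ, hσ⟩ := Z.mkQ.exists_rightInverse_of_surjective Z.range_mkQ
  set T := Z.subtype ∘ₗ S ∘ₗ π + σ ∘ₗ N ∘ₗ Z.mkQ
  have hTZ (z : V) (hz : z ∈ Z) : T z = S ⟨z, hz⟩ := by
    have : π z = ⟨z, hz⟩ := congr($hπ ⟨z, hz⟩)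
    simp [T, this, (Submodule.Quotient.mk_eq_zero Z).2 hz]
  have hTQ (x : V) : Z.mkQ (T x) = N (Z.mkQ x) := by
    have h₁ : Z.mkQ (S (π x) : V) = 0 := (Submodule.Quotient.mk_eq_zero Z).2 (S (π x)).2
    have h₂ := congr($hσ (N (Z.mkQ x)))
    simp only [T, LinearMap.add_apply, LinearMap.comp_apply, map_add, Submodule.subtype_apply, h₁,
      zero_add]
    exact h₂
  refine ⟨⟨T, fun z hz ↦ ?_⟩, ?_⟩
  · simp only [mem_comap, hTZ z hz, SetLike.coe_mem]
  · ext x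
    · exact hTZ x.1 x.2
    · exact hTQ x

variable {Z} {T₀ : End K V} (h₀ : Z ≤ Z.comap T₀)

def eqOnEquivCompatibleMaps (q : End K V → Prop) :
    {T : End K V // EqOn T T₀ Z ∧ q T} ≃
      {f : Z.compatibleMaps Z // f.1.restrict f.2 = T₀.restrict h₀ ∧ q f.1} where
  toFun T := ⟨⟨T.1, fun z hz ↦ by simpa [T.2.1 hz] using h₀ hz⟩,
    LinearMap.ext fun z ↦ Subtype.ext (T.2.1 z.2), T.2.2⟩
  invFun f := ⟨f.1.1, fun z hz ↦ congr(($(f.2.1) ⟨z, hz⟩ : V)), f.2.2⟩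
  left_inv _ := rfl
  right_inv _ := rfl

theorem card_eqOn_eq_card_quotient_mul [Finite V] (hnil : IsNilpotent (T₀.restrict h₀))
    (hQ : Nat.card (V ⧸ Z) * Nat.card {N : End K (V ⧸ Z) // IsNilpotent N} =
      Nat.card (End K (V ⧸ Z))) :
    Nat.card {T : End K V // EqOn T T₀ Z} =
      Nat.card (V ⧸ Z) * Nat.card {T : End K V // EqOn T T₀ Z ∧ IsNilpotent T} := by
  have hcard (t : Set (End K (V ⧸ Z))) :
      Nat.card (Z.restrictMapQ ⁻¹' ({T₀.restrict h₀} ×ˢ t)) =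
        Nat.card (AddMonoidHom.ker Z.restrictMapQ.toAddMonoidHom) * Nat.card t := by
    refine (AddMonoidHom.card_preimage_of_surjective (f := Z.restrictMapQ.toAddMonoidHom)
      Z.restrictMapQ_surjective _).trans ?_
    rw [Set.singleton_prod, Nat.card_image_of_injective (Prod.mk_right_injective _)]
  have hall : Nat.card {T : End K V // EqOn T T₀ Z} =
      Nat.card (Z.restrictMapQ ⁻¹' ({T₀.restrict h₀} ×ˢ univ)) := by
    refine Nat.card_congr <| (Equiv.subtypeEquivRight fun _ ↦ (and_true _).to_iff.symm).trans <|
      (eqOnEquivCompatibleMaps h₀ fun _ ↦ True).trans <| Equiv.subtypeEquivRight fun f ↦ ?_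
    simp
  have hnil : Nat.card {T : End K V // EqOn T T₀ Z ∧ IsNilpotent T} =
      Nat.card (Z.restrictMapQ ⁻¹' ({T₀.restrict h₀} ×ˢ {N | IsNilpotent N})) := by
    refine Nat.card_congr <| (eqOnEquivCompatibleMaps h₀ IsNilpotent).trans <|
      Equiv.subtypeEquivRight fun f ↦ ?_
    simp only [mem_preimage, restrictMapQ_apply, Module.End.isNilpotent_iff_restrict_and_mapQ f.2]
    rw [Set.mem_prod, mem_singleton_iff, Set.mem_ofPred_eq]
    constructor
    · rintro ⟨h, -, hq⟩
      exact ⟨h, hq⟩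
    · rintro ⟨h, hq⟩
      exact ⟨h, (congrArg IsNilpotent h).mpr hnil, hq⟩
  rw [hall, hnil, hcard, hcard, Nat.card_univ, Set.coe_ofPred, ← hQ]
  ring

end Submodule

section KrylovChain

variable {R M : Type*} [Semiring R] [AddCommMonoid M] [Module R M] {k : ℕ}

def IsKrylovChain (T : End R M) (u : Fin (k + 1) → M) : Prop :=
  ∀ i : Fin k, T (u i.castSucc) = u i.succ

variable {T T₀ : End R M} {u : Fin (k + 1) → M}

theorem IsKrylovChain.apply_eq_pow (h : IsKrylovChain T u) (i : Fin (k + 1)) :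
    u i = (T ^ (i : ℕ)) (u 0) := by
  induction i using Fin.induction with
  | zero => simp
  | succ i ih => rw [← h i, ih, Fin.val_succ, Fin.val_castSucc, pow_succ', Module.End.mul_apply]

theorem isKrylovChain_snoc {w : M} :
    IsKrylovChain T (Fin.snoc u w : Fin (k + 2) → M) ↔
      IsKrylovChain T u ∧ T (u (Fin.last k)) = w := by
  simp only [IsKrylovChain, Fin.forall_fin_succ' (n := k), Fin.snoc_castSucc, Fin.succ_castSucc,
    Fin.succ_last, Fin.snoc_last]

theorem IsKrylovChain.pow_apply_eq_zero (h : IsKrylovChain T u) (hlast : T (u (Fin.last k)) = 0)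
    (i : Fin (k + 1)) : (T ^ (k + 1)) (u i) = 0 := by
  have hk : (T ^ k) (u 0) = u (Fin.last k) := by rw [h.apply_eq_pow (Fin.last k), Fin.val_last]
  rw [h.apply_eq_pow i, ← Module.End.mul_apply, ← pow_add, add_comm, pow_add,
    Module.End.mul_apply, pow_succ', Module.End.mul_apply, hk, hlast, map_zero]

theorem IsKrylovChain.span_le_comap (h : IsKrylovChain T u)
    (hlast : T (u (Fin.last k)) ∈ Submodule.span R (range u)) :
    Submodule.span R (range u) ≤ (Submodule.span R (range u)).comap T := by
  rw [Submodule.span_le]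
  rintro _ ⟨i, rfl⟩
  induction i using Fin.lastCases with
  | last => exact hlast
  | cast i =>
    change T (u i.castSucc) ∈ Submodule.span R (range u)
    rw [h i]
    exact Submodule.subset_span ⟨_, rfl⟩

theorem IsKrylovChain.and_apply_last_eq_zero_iff (h₀ : IsKrylovChain T₀ u)
    (h₀' : T₀ (u (Fin.last k)) = 0) :
    IsKrylovChain T u ∧ T (u (Fin.last k)) = 0 ↔ EqOn T T₀ (Submodule.span R (range u)) := by
  refine ⟨fun ⟨h, h'⟩ ↦ LinearMap.eqOn_span' ?_, fun hT ↦ ⟨fun i ↦ ?_, ?_⟩⟩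
  · rintro _ ⟨i, rfl⟩
    induction i using Fin.lastCases with
    | last => rw [h', h₀']
    | cast i => rw [h i, h₀ i]
  · rw [hT (Submodule.subset_span ⟨_, rfl⟩), h₀ i]
  · rw [hT (Submodule.subset_span ⟨_, rfl⟩), h₀']

end KrylovChain

section Field

variable {K : Type*} {V : Type v} [Field K] [AddCommGroup V] [Module K V] {k : ℕ}
  {u : Fin (k + 1) → V}

theorem IsKrylovChain.apply_last_eq_zero {T : End K V} (h : IsKrylovChain T u)
    (hT : IsNilpotent T) (hlast : T (u (Fin.last k)) ∈ Submodule.span K (range u)) :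
    T (u (Fin.last k)) = 0 := by
  have hZ : ∀ x ∈ Submodule.span K (range u), T x ∈ Submodule.span K (range u) :=
    h.span_le_comap hlast
  have := FiniteDimensional.span_of_finite K (finite_range u)
  have hpow : T.restrict hZ ^ (k + 1) = 0 := by
    obtain ⟨n, hn⟩ := Module.End.isNilpotent.restrict hZ hT
    have hker := Module.End.ker_pow_le_ker_pow_finrank (T.restrict hZ) n
    rw [hn, LinearMap.ker_zero, top_le_iff, LinearMap.ker_eq_top] at hker
    exact pow_eq_zero_of_le ((finrank_range_le_card u).trans (by simp)) hker
  have := congr(($hpow ⟨u 0, Submodule.subset_span ⟨0, rfl⟩⟩ : V))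
  rw [Module.End.pow_restrict, LinearMap.restrict_apply] at this
  rwa [h.apply_eq_pow (Fin.last k), Fin.val_last, ← Module.End.mul_apply, ← pow_succ']

theorem LinearIndependent.exists_linearMap_apply_eq {ι W : Type*} [AddCommGroup W] [Module K W]
    {v : ι → V} (hv : LinearIndependent K v) (w : ι → W) :
    ∃ f : V →ₗ[K] W, ∀ i, f (v i) = w i := by
  obtain ⟨f, hf⟩ := LinearMap.exists_extend ((Basis.span hv).constr K w)
  refine ⟨f, fun i ↦ ?_⟩
  have := congr($hf (Basis.span hv i))
  rwa [LinearMap.comp_apply, Module.Basis.constr_basis, Basis.span_apply] at this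

theorem card_isKrylovChain_and_apply_last_mem (hu : LinearIndependent K u) (s : Set V) :
    Nat.card {T : End K V // IsKrylovChain T u ∧ T (u (Fin.last k)) ∈ s} =
      Nat.card s * Nat.card {T : End K V // IsKrylovChain T u ∧ T (u (Fin.last k)) = 0} := by
  classical
  -- `T ↦ T - φ ⊗ T u_k` with `φ` the coordinate of `u_k` moves `T` into the fibre over `0`.
  obtain ⟨φ, hφ⟩ := hu.exists_linearMap_apply_eq fun i ↦ if i = Fin.last k then (1 : K) else 0
  have hφc (i : Fin k) : φ (u i.castSucc) = 0 := by simp [hφ, Fin.castSucc_ne_last]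
  have hφl : φ (u (Fin.last k)) = 1 := by simp [hφ]
  rw [← Nat.card_prod]
  refine Nat.card_congr
    { toFun T := (⟨T.1 (u (Fin.last k)), T.2.2⟩,
        ⟨T.1 - φ.smulRight (T.1 (u (Fin.last k))), fun i ↦ by simp [hφc, T.2.1 i], by simp [hφl]⟩)
      invFun x := ⟨x.2.1 + φ.smulRight x.1.1, fun i ↦ by simp [hφc, x.2.2.1 i],
        by simp [hφl, x.2.2.2]⟩
      left_inv T := by ext : 1; simp
      right_inv x := by ext <;> simp [hφl, x.2.2.2] }

theorem finrank_quotient_span_lt [FiniteDimensional K V] (hu : LinearIndependent K u) :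
    finrank K (V ⧸ Submodule.span K (range u)) < finrank K V := by
  have := (Submodule.span K (range u)).finrank_quotient_add_finrank
  rw [finrank_span_eq_card hu, Fintype.card_fin] at this
  omega

variable [Finite V]

theorem card_isKrylovChain_and_apply_last_eq_zero (hu : LinearIndependent K u)
    (hQ : Nat.card (V ⧸ Submodule.span K (range u)) *
        Nat.card {N : End K (V ⧸ Submodule.span K (range u)) // IsNilpotent N} =
      Nat.card (End K (V ⧸ Submodule.span K (range u)))) :
    Nat.card {T : End K V // IsKrylovChain T u ∧ T (u (Fin.last k)) = 0} =
      Nat.card (V ⧸ Submodule.span K (range u)) *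
        Nat.card {T : End K V // IsKrylovChain T u ∧ T (u (Fin.last k)) = 0 ∧ IsNilpotent T} := by
  obtain ⟨T₀, hT₀⟩ := hu.exists_linearMap_apply_eq (Fin.snoc (fun i : Fin k ↦ u i.succ) 0)
  have h₀ : IsKrylovChain T₀ u := fun i ↦ by rw [hT₀, Fin.snoc_castSucc]
  have h₀' : T₀ (u (Fin.last k)) = 0 := by rw [hT₀, Fin.snoc_last]
  have hZ : ∀ x ∈ Submodule.span K (range u), T₀ x ∈ Submodule.span K (range u) :=
    h₀.span_le_comap (h₀' ▸ zero_mem _)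
  have hnil : IsNilpotent (T₀.restrict hZ) := by
    have hker : Submodule.span K (range u) ≤ LinearMap.ker (T₀ ^ (k + 1)) :=
      Submodule.span_le.2 <| range_subset_iff.2 (h₀.pow_apply_eq_zero h₀')
    refine ⟨k + 1, LinearMap.ext fun z ↦ ?_⟩
    rw [Module.End.pow_restrict, LinearMap.restrict_apply, LinearMap.zero_apply]
    exact Subtype.ext (hker z.2)
  rw [Nat.card_congr (Equiv.subtypeEquivRight fun T ↦ h₀.and_apply_last_eq_zero_iff h₀'),
    Nat.card_congr (Equiv.subtypeEquivRight fun T ↦ (and_assoc ..).symm.trans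
      (and_congr_left' (h₀.and_apply_last_eq_zero_iff h₀'))),
    Submodule.card_eqOn_eq_card_quotient_mul hZ hnil hQ]

theorem card_isKrylovChain_and_apply_last_mem_span (hu : LinearIndependent K u)
    (hQ : Nat.card (V ⧸ Submodule.span K (range u)) *
        Nat.card {N : End K (V ⧸ Submodule.span K (range u)) // IsNilpotent N} =
      Nat.card (End K (V ⧸ Submodule.span K (range u)))) :
    Nat.card {T : End K V //
        IsKrylovChain T u ∧ T (u (Fin.last k)) ∈ Submodule.span K (range u)} =
      Nat.card V * Nat.card {T : End K V //
        (IsKrylovChain T u ∧ IsNilpotent T) ∧ T (u (Fin.last k)) ∈ Submodule.span K (range u)} := by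
  have hnil : Nat.card {T : End K V //
      (IsKrylovChain T u ∧ IsNilpotent T) ∧ T (u (Fin.last k)) ∈ Submodule.span K (range u)} =
      Nat.card {T : End K V // IsKrylovChain T u ∧ T (u (Fin.last k)) = 0 ∧ IsNilpotent T} :=
    Nat.card_congr <| Equiv.subtypeEquivRight fun T ↦
      ⟨fun ⟨⟨h, hT⟩, hmem⟩ ↦ ⟨h, h.apply_last_eq_zero hT hmem, hT⟩,
        fun ⟨h, hlast, hT⟩ ↦ ⟨⟨h, hT⟩, hlast ▸ zero_mem _⟩⟩
  refine (card_isKrylovChain_and_apply_last_mem hu (Submodule.span K (range u))).trans ?_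
  rw [hnil, (Submodule.span K (range u)).card_eq_card_quotient_mul_card, mul_assoc,
    card_isKrylovChain_and_apply_last_eq_zero hu hQ]
  rfl

end Field

theorem card_isKrylovChain_eq_card_mul {K : Type*} {V : Type v} [Field K] [AddCommGroup V]
    [Module K V] [Finite V]
    (ih : ∀ (W : Type v) [AddCommGroup W] [Module K W] [Finite W], finrank K W < finrank K V →
      Nat.card W * Nat.card {N : End K W // IsNilpotent N} = Nat.card (End K W))
    {k : ℕ} {u : Fin (k + 1) → V} (hu : LinearIndependent K u) :
    Nat.card {T : End K V // IsKrylovChain T u} =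
      Nat.card V * Nat.card {T : End K V // IsKrylovChain T u ∧ IsNilpotent T} := by
  classical
  set Z := Submodule.span K (range u)
  -- `none` collects the operators along which the chain closes up.
  let f (T : End K V) : Option V :=
    if T (u (Fin.last k)) ∈ Z then none else some (T (u (Fin.last k)))
  refine Nat.card_subtype_eq_mul_of_fiber f ?_
  rintro (_ | w)
  · have hf (T : End K V) : f T = none ↔ T (u (Fin.last k)) ∈ Z := by simp [f]
    simp only [hf]
    exact card_isKrylovChain_and_apply_last_mem_span hu (ih _ (finrank_quotient_span_lt hu))
  by_cases hw : w ∈ Z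
  · have hf (T : End K V) : f T ≠ some w := by
      simp only [f]
      split_ifs with h <;> simp only [reduceCtorEq, ne_eq, not_false_eq_true, Option.some_inj]
      rintro rfl
      exact h hw
    simp [hf]
  have hf (T : End K V) : f T = some w ↔ T (u (Fin.last k)) = w := by
    simp only [f]
    split_ifs with h
    · simp only [false_iff]
      rintro rfl
      exact hw h
    · exact Option.some_inj
  have hsnoc := linearIndependent_finSnoc.2 ⟨hu, hw⟩
  rw [Nat.card_congr (Equiv.subtypeEquivRight fun T ↦ (and_congr_right' (hf T)).trans
      isKrylovChain_snoc.symm),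
    Nat.card_congr (Equiv.subtypeEquivRight fun T ↦ (and_congr_right' (hf T)).trans <|
      (and_right_comm ..).trans (and_congr_left' isKrylovChain_snoc.symm)),
    card_isKrylovChain_eq_card_mul ih hsnoc]
termination_by finrank K V - k
decreasing_by
  have := hsnoc.fintype_card_le_finrank
  rw [Fintype.card_fin] at this
  omega

theorem card_mul_card_isNilpotent (K : Type*) [Field K] (V : Type v) [AddCommGroup V] [Module K V]
    [Finite V] : Nat.card V * Nat.card {T : End K V // IsNilpotent T} = Nat.card (End K V) := by
  induction hn : finrank K V using Nat.strong_induction_on generalizing V with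
  | _ n ih =>
  rcases subsingleton_or_nontrivial V with hV | hV
  · simp [Nat.card_unique]
  obtain ⟨e, he⟩ := exists_ne (0 : V)
  have hu : LinearIndependent K ![e] := linearIndependent_unique_iff.2 (by simpa using he)
  have := card_isKrylovChain_eq_card_mul (fun W _ _ _ hW ↦ ih _ (hn ▸ hW) W rfl) (k := 0) hu
  simpa [IsKrylovChain] using this.symm

theorem stmt_1_general (K : Type*) [Field K]
    (X : Type*) [AddCommGroup X] [Module K X] [Finite X] :
    Nat.card X * Nat.card {T : Module.End K X // IsNilpotent T}
      = Nat.card (Module.End K X) :=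
  card_mul_card_isNilpotent K X

theorem stmt_1 (K : Type*) [Field K] [Finite K]
    (X : Type*) [AddCommGroup X] [Module K X] [Finite X] :
    Nat.card X * Nat.card {T : Module.End K X // IsNilpotent T}
      = Nat.card (Module.End K X) :=
  stmt_1_general K X
end

section
/- Let X be a finite set with N ≥ 1 elements. The number of functions T : X → X that are eventually constant (i.e., some iterate T^k is a constant function) equals N^(N-1). -/
/-!
Joyal's bijection between pairs `(T, x)`, with `T` eventually constant, and endofunctions `f`.
Every orbit of `f` falls into the set `C` of periodic points, on which `f` is a permutation.
Listing `C` in a fixed reference order and applying `f` turns this permutation into an arrangement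
`L` of `C`; the pair is `(T, x)`, where `T` agrees with `f` off `C`, moves each entry of `L` to
the next one and fixes the last, and `x` is the first entry. Conversely `L` is recovered from
`(T, x)` as the path `x, T x, T² x, …` up to the first fixed point, and `f` by undoing the
reordering on `L`. Hence `#{eventually constant maps} * N = N ^ N`.
-/

open Function Set

namespace Function

variable {X : Type*}

def IsEventuallyConst (T : X → X) : Prop := ∃ k, ∀ x y, T^[k] x = T^[k] y

theorem exists_iterate_mem_of_eqOn_compl {f g : X → X} {C : Set X} (hfg : EqOn f g Cᶜ)
    {y : X} (hf : ∃ k, f^[k] y ∈ C) : ∃ k, g^[k] y ∈ C := by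
  classical
  refine ⟨Nat.find hf, ?_⟩
  suffices h : ∀ j ≤ Nat.find hf, g^[j] y = f^[j] y by
    rw [h _ le_rfl]
    exact Nat.find_spec hf
  intro j hj
  induction j with
  | zero => rfl
  | succ j ih =>
    rw [iterate_succ_apply', iterate_succ_apply', ih (by omega),
      hfg (Nat.find_min hf (by omega))]

theorem exists_iterate_mem_periodicPts [Finite X] (f : X → X) (y : X) :
    ∃ k, f^[k] y ∈ periodicPts f := by
  obtain ⟨i, j, hne, heq⟩ := Finite.exists_ne_map_eq_of_infinite (f^[·] y)
  wlog hij : i < j generalizing i j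
  · exact this j i hne.symm heq.symm (by omega)
  refine ⟨i, mk_mem_periodicPts (n := j - i) (by omega) ?_⟩
  change f^[j - i] (f^[i] y) = f^[i] y
  rw [← iterate_add_apply, Nat.sub_add_cancel hij.le]
  exact heq.symm

theorem periodicPts_eq_of_injOn [Finite X] {f : X → X} {C : Set X} (hmaps : MapsTo f C C)
    (hinj : InjOn f C) (hreach : ∀ y, ∃ k, f^[k] y ∈ C) : periodicPts f = C := by
  refine Subset.antisymm ?_ fun y hy => ?_
  · rintro y ⟨n, hn, hper⟩
    obtain ⟨k, hk⟩ := hreach y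
    have hy : f^[n * k - k] (f^[k] y) = y := by
      rw [← iterate_add_apply, Nat.sub_add_cancel (Nat.le_mul_of_pos_left k hn)]
      exact (hper.mul_const k).eq
    exact hy ▸ hmaps.iterate _ hk
  · obtain ⟨n, hn, hper⟩ := (hmaps.restrict_inj.2 hinj).mem_periodicPts ⟨y, hy⟩
    exact mk_mem_periodicPts hn (hper.map (g := Subtype.val) fun _ => rfl)

namespace IsEventuallyConst

variable {T : X → X}

theorem of_forall_exists_iterate_eq [Finite X] {r : X} (hr : IsFixedPt T r)
    (h : ∀ y, ∃ k, T^[k] y = r) : IsEventuallyConst T := by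
  choose k hk using h
  obtain ⟨K, hK⟩ := (finite_range k).bddAbove
  have hKr (y : X) : T^[K] y = r := by
    rw [← Nat.sub_add_cancel (hK ⟨y, rfl⟩), iterate_add_apply, hk, iterate_fixed hr]
  exact ⟨K, fun x y => (hKr x).trans (hKr y).symm⟩

theorem exists_isFixedPt_iterate (hT : IsEventuallyConst T) (x : X) :
    ∃ j, IsFixedPt T (T^[j] x) := by
  obtain ⟨k, hk⟩ := hT
  exact ⟨k, by rw [IsFixedPt, ← iterate_succ_apply' T k x, iterate_succ_apply, hk]⟩

theorem isFixedPt_of_mem_periodicPts (hT : IsEventuallyConst T) {y : X}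
    (hy : y ∈ periodicPts T) : IsFixedPt T y := by
  obtain ⟨n, hn, hper⟩ := hy
  obtain ⟨k, hk⟩ := hT
  have hy : T^[n * k - k + k] y = y := by
    rw [Nat.sub_add_cancel (Nat.le_mul_of_pos_left k hn)]
    exact (hper.mul_const k).eq
  calc T y = T (T^[n * k - k + k] y) := by rw [hy]
    _ = T^[n * k - k + k] (T y) := ((Commute.iterate_self T _).eq y).symm
    _ = y := by rw [iterate_add_apply, hk, ← iterate_add_apply, hy]

end IsEventuallyConst

end Function

namespace Joyal

variable {X : Type*}

def IsPath (T : X → X) (L : List X) : Prop :=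
  ∀ i (hi : i < L.length), T L[i] = L[min (i + 1) (L.length - 1)]

namespace IsPath

variable {T : X → X} {L : List X}

theorem iterate_getElem (hP : IsPath T L) (k : ℕ) {i : ℕ} (hi : i < L.length) :
    T^[k] L[i] = L[min (i + k) (L.length - 1)] := by
  induction k with
  | zero => simp only [iterate_zero, id_eq]; congr 1; omega
  | succ k ih => rw [iterate_succ_apply', ih, hP]; congr 1; omega

theorem apply_eq {T' : X → X} (hP : IsPath T L) (hP' : IsPath T' L) {y : X} (hy : y ∈ L) :
    T y = T' y := by
  obtain ⟨i, hi, rfl⟩ := List.getElem_of_mem hy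
  rw [hP i hi, hP' i hi]

theorem isEventuallyConst [Finite X] (hP : IsPath T L) (hL : L ≠ [])
    (hreach : ∀ y, ∃ k, T^[k] y ∈ L) : IsEventuallyConst T := by
  have hlen : 0 < L.length := List.length_pos_iff.2 hL
  refine .of_forall_exists_iterate_eq (r := L[L.length - 1]) ?_ fun y => ?_
  · rw [IsFixedPt, hP _ (by omega)]
    congr 1
    omega
  · obtain ⟨k, hk⟩ := hreach y
    obtain ⟨i, hi, hki⟩ := List.getElem_of_mem hk
    refine ⟨L.length + k, ?_⟩
    rw [iterate_add_apply, ← hki, hP.iterate_getElem]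
    congr 1
    omega

end IsPath

/-- `sInf ∅ = 0`, so this is meaningful only when the orbit of `x` reaches a fixed point. -/
noncomputable def rootTime (T : X → X) (x : X) : ℕ := sInf {j | IsFixedPt T (T^[j] x)}

noncomputable def spine (T : X → X) (x : X) : List X :=
  (List.range (rootTime T x + 1)).map (T^[·] x)

section Spine

variable {T : X → X} {x : X}

@[simp]
theorem length_spine : (spine T x).length = rootTime T x + 1 := by simp [spine]

@[simp]
theorem getElem_spine {i : ℕ} (hi : i < (spine T x).length) : (spine T x)[i] = T^[i] x := by
  simp only [spine, List.getElem_map, List.getElem_range]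

theorem isFixedPt_iterate_rootTime (h : ∃ j, IsFixedPt T (T^[j] x)) :
    IsFixedPt T (T^[rootTime T x] x) :=
  Nat.sInf_mem h

theorem rootTime_le {j : ℕ} (h : IsFixedPt T (T^[j] x)) : rootTime T x ≤ j :=
  Nat.sInf_le h

theorem isPath_spine (h : ∃ j, IsFixedPt T (T^[j] x)) : IsPath T (spine T x) := by
  intro i hi
  simp only [getElem_spine, length_spine] at hi ⊢
  rcases Nat.lt_or_ge i (rootTime T x) with hlt | hge
  · rw [← iterate_succ_apply' T]
    congr 1
    omega
  · obtain rfl : i = rootTime T x := by omega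
    rw [isFixedPt_iterate_rootTime h]
    congr 1
    omega

theorem iterate_mem_spine (h : ∃ j, IsFixedPt T (T^[j] x)) (k : ℕ) : T^[k] x ∈ spine T x := by
  have := (isPath_spine h).iterate_getElem k (i := 0) (by simp)
  rw [getElem_spine, iterate_zero_apply] at this
  exact this ▸ List.getElem_mem _

theorem iterate_ne_iterate_of_lt (hT : IsEventuallyConst T) {i j : ℕ} (hij : i < j)
    (hj : j ≤ rootTime T x) : T^[i] x ≠ T^[j] x := by
  intro heq
  have hper : T^[i] x ∈ periodicPts T := by
    refine mk_mem_periodicPts (n := j - i) (by omega) ?_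
    change T^[j - i] (T^[i] x) = T^[i] x
    rw [← iterate_add_apply, Nat.sub_add_cancel hij.le]
    exact heq.symm
  have := rootTime_le (hT.isFixedPt_of_mem_periodicPts hper)
  omega

theorem nodup_spine (hT : IsEventuallyConst T) (x : X) : (spine T x).Nodup := by
  refine List.Nodup.map_on (fun i hi j hj heq => ?_) List.nodup_range
  simp only [List.mem_range] at hi hj
  rcases lt_trichotomy i j with hlt | rfl | hgt
  · exact absurd heq (iterate_ne_iterate_of_lt hT hlt (by omega))
  · rfl
  · exact absurd heq.symm (iterate_ne_iterate_of_lt hT hgt (by omega))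

theorem spine_eq_of_isPath {L : List X} (hL : L.Nodup) (hP : IsPath T L) (h0 : 0 < L.length) :
    spine T L[0] = L := by
  have hiter (k : ℕ) : T^[k] L[0] = L[min k (L.length - 1)] := by
    rw [hP.iterate_getElem]
    congr 1
    omega
  have hend : IsFixedPt T (T^[L.length - 1] L[0]) := by
    rw [IsFixedPt, hiter, hP]
    congr 1
    omega
  have hroot : rootTime T L[0] = L.length - 1 := by
    refine le_antisymm (rootTime_le hend) ?_
    have hfix := isFixedPt_iterate_rootTime ⟨_, hend⟩
    rw [IsFixedPt, ← iterate_succ_apply' T, hiter, hiter] at hfix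
    have := hL.getElem_inj_iff.1 hfix
    omega
  refine List.ext_getElem (by simp [hroot]; omega) fun i h1 _ => ?_
  rw [getElem_spine, hiter]
  congr 1
  simp only [length_spine] at h1
  omega

end Spine

noncomputable def cycleList [Finite X] (f : X → X) : List X :=
  (toFinite (periodicPts f)).toFinset.toList.map f

section CycleList

variable [Finite X] (f : X → X)

theorem mem_cycleList {y : X} : y ∈ cycleList f ↔ y ∈ periodicPts f := by
  simp only [cycleList, List.mem_map, Finset.mem_toList, Finite.mem_toFinset]
  exact ⟨fun ⟨_, ha, hay⟩ => hay ▸ (bijOn_periodicPts (f := f)).mapsTo ha,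
    fun hy => (bijOn_periodicPts (f := f)).surjOn hy⟩

theorem nodup_cycleList : (cycleList f).Nodup :=
  (Finset.nodup_toList _).map_on fun _ ha _ hb =>
    (bijOn_periodicPts (f := f)).injOn (by simpa using ha) (by simpa using hb)

theorem cycleList_ne_nil [Nonempty X] : cycleList f ≠ [] := by
  obtain ⟨y⟩ := ‹Nonempty X›
  obtain ⟨k, hk⟩ := exists_iterate_mem_periodicPts f y
  exact List.ne_nil_of_mem ((mem_cycleList f).2 hk)

end CycleList

variable [DecidableEq X]

def walkAlong (L : List X) (g : X → X) (y : X) : X :=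
  if y ∈ L then L.getD (L.idxOf y + 1) y else g y

theorem walkAlong_of_notMem {L : List X} {g : X → X} {y : X} (hy : y ∉ L) :
    walkAlong L g y = g y :=
  if_neg hy

theorem isPath_walkAlong {L : List X} (hL : L.Nodup) (g : X → X) :
    IsPath (walkAlong L g) L := by
  intro i hi
  rw [walkAlong, if_pos (List.getElem_mem hi), hL.idxOf_getElem]
  rcases Nat.lt_or_ge (i + 1) L.length with h | h
  · rw [List.getD_eq_getElem _ _ h]
    congr 1
    omega
  · rw [List.getD_eq_default _ _ h]
    congr 1
    omega

def relabel (R L : List X) (y : X) : X := L.getD (R.idxOf y) y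

theorem map_relabel {R L : List X} (hR : R.Nodup) (hlen : R.length = L.length) :
    R.map (relabel R L) = L := by
  refine List.ext_getElem (by simp [hlen]) fun i _ _ => ?_
  rw [List.getElem_map, relabel, hR.idxOf_getElem, List.getD_eq_getElem]

theorem relabel_map {R : List X} {g : X → X} {y : X} (hy : y ∈ R) :
    relabel R (R.map g) y = g y := by
  have hidx := List.idxOf_lt_length_iff.2 hy
  rw [relabel, List.getD_eq_getElem _ _ (by simpa using hidx), List.getElem_map,
    List.getElem_idxOf hidx]

noncomputable def toEndo (T : X → X) (x : X) (y : X) : X :=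
  if y ∈ spine T x then relabel (spine T x).toFinset.toList (spine T x) y else T y

section ToEndo

variable {T : X → X} (x : X)

theorem toEndo_of_mem {y : X} (hy : y ∈ spine T x) :
    toEndo T x y = relabel (spine T x).toFinset.toList (spine T x) y :=
  if_pos hy

theorem toEndo_of_notMem {y : X} (hy : y ∉ spine T x) : toEndo T x y = T y :=
  if_neg hy

theorem map_toEndo (hT : IsEventuallyConst T) :
    (spine T x).toFinset.toList.map (toEndo T x) = spine T x := by
  rw [List.map_congr_left fun y hy => toEndo_of_mem x (by simpa using hy)]
  exact map_relabel (Finset.nodup_toList _)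
    (by rw [Finset.length_toList, List.toFinset_card_of_nodup (nodup_spine hT x)])

theorem periodicPts_toEndo [Finite X] (hT : IsEventuallyConst T) :
    periodicPts (toEndo T x) = {y | y ∈ spine T x} := by
  have hmap := map_toEndo x hT
  refine periodicPts_eq_of_injOn (fun y hy => ?_) (fun y hy z hz => ?_) fun y => ?_
  · rw [← hmap]
    exact List.mem_map_of_mem (by simpa using hy)
  · exact List.inj_on_of_nodup_map (hmap ▸ nodup_spine hT x) (by simpa using hy)
      (by simpa using hz)
  · refine exists_iterate_mem_of_eqOn_compl (f := T)
      (fun z hz => (toEndo_of_notMem x hz).symm) ?_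
    obtain ⟨k, hk⟩ := id hT
    refine ⟨k, ?_⟩
    change T^[k] y ∈ spine T x
    rw [hk y x]
    exact iterate_mem_spine (hT.exists_isFixedPt_iterate x) k

theorem cycleList_toEndo [Finite X] (hT : IsEventuallyConst T) :
    cycleList (toEndo T x) = spine T x := by
  have hC : (toFinite (periodicPts (toEndo T x))).toFinset = (spine T x).toFinset := by
    ext
    simp [periodicPts_toEndo x hT]
  rw [cycleList, hC, map_toEndo x hT]

theorem walkAlong_cycleList_toEndo [Finite X] (hT : IsEventuallyConst T) :
    walkAlong (cycleList (toEndo T x)) (toEndo T x) = T := by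
  rw [cycleList_toEndo x hT]
  funext y
  by_cases hy : y ∈ spine T x
  · exact (isPath_walkAlong (nodup_spine hT x) _).apply_eq
      (isPath_spine (hT.exists_isFixedPt_iterate x)) hy
  · rw [walkAlong_of_notMem hy, toEndo_of_notMem x hy]

theorem getD_cycleList_toEndo [Finite X] [Inhabited X] (hT : IsEventuallyConst T) :
    (cycleList (toEndo T x)).getD 0 default = x := by
  rw [cycleList_toEndo x hT, List.getD_eq_getElem _ _ (by simp), getElem_spine,
    iterate_zero_apply]

end ToEndo

section OfEndo

variable [Finite X] (f : X → X)

theorem isEventuallyConst_walkAlong [Nonempty X] :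
    IsEventuallyConst (walkAlong (cycleList f) f) :=
  (isPath_walkAlong (nodup_cycleList f) f).isEventuallyConst (cycleList_ne_nil f) fun y =>
    exists_iterate_mem_of_eqOn_compl (C := {y | y ∈ cycleList f})
      (fun _ hz => (walkAlong_of_notMem hz).symm)
      (by
        obtain ⟨k, hk⟩ := exists_iterate_mem_periodicPts f y
        exact ⟨k, (mem_cycleList f).2 hk⟩)

theorem toEndo_walkAlong [Inhabited X] :
    toEndo (walkAlong (cycleList f) f) ((cycleList f).getD 0 default) = f := by
  have hL := nodup_cycleList f
  have hL0 : 0 < (cycleList f).length := List.length_pos_iff.2 (cycleList_ne_nil f)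
  have hspine :
      spine (walkAlong (cycleList f) f) ((cycleList f).getD 0 default) = cycleList f := by
    rw [List.getD_eq_getElem _ _ hL0]
    exact spine_eq_of_isPath hL (isPath_walkAlong hL f) hL0
  have hC : (cycleList f).toFinset = (toFinite (periodicPts f)).toFinset := by
    ext
    simp [mem_cycleList]
  funext y
  rw [toEndo, hspine]
  split_ifs with hy
  · rw [hC]
    exact relabel_map (by simpa using (mem_cycleList f).1 hy)
  · exact walkAlong_of_notMem hy

end OfEndo

noncomputable def equiv [Finite X] [Inhabited X] :
    {T : X → X // IsEventuallyConst T} × X ≃ (X → X) where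
  toFun p := toEndo p.1 p.2
  invFun f := (⟨_, isEventuallyConst_walkAlong f⟩, (cycleList f).getD 0 default)
  left_inv := fun ⟨⟨_, hT⟩, x⟩ =>
    Prod.ext (Subtype.ext (walkAlong_cycleList_toEndo x hT)) (getD_cycleList_toEndo x hT)
  right_inv f := toEndo_walkAlong f

end Joyal

theorem Function.card_isEventuallyConst_mul_card {X : Type*} [Finite X] [Nonempty X] :
    Nat.card {T : X → X // IsEventuallyConst T} * Nat.card X = Nat.card X ^ Nat.card X := by
  classical
  inhabit X
  rw [← Nat.card_prod, Nat.card_congr Joyal.equiv, Nat.card_fun]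

theorem stmt_14 (X : Type*) [Fintype X] (N : ℕ) (hN : Fintype.card X = N) (h1 : 1 ≤ N) :
    Nat.card {T : X → X // ∃ k : ℕ, ∀ x y : X, T^[k] x = T^[k] y} = N ^ (N - 1) := by
  have : Nonempty X := Fintype.card_pos_iff.1 (by omega)
  have h := Function.card_isEventuallyConst_mul_card (X := X)
  rw [Nat.card_eq_fintype_card (α := X), hN] at h
  refine Nat.eq_of_mul_eq_mul_right h1 (h.trans ?_)
  rw [← pow_succ, Nat.sub_add_cancel h1]
end

section
/- Let X be an n-dimensional vector space over a finite field with q elements. Then the number of linear operators on X whose Fitting decomposition has nilpotent part equal to all of X (i.e., the operator is nilpotent) times q^n equals q^(n^2), the total number of operators. -/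
/-!
By the Fitting decomposition, an endomorphism of a finite-dimensional space `V` is the same thing
as a pair of complementary subspaces `W ⊕ U` together with a nilpotent endomorphism of `W` and an
automorphism of `U`. Ordered bases of `V` adapted to such a splitting show that there are
`|GL_n| / (|GL_k| |GL_(n-k)|)` complementary pairs with `dim W = k`, so counting all
endomorphisms gives `q^(n²) / |GL_n| = ∑_{k ≤ n} N_k / |GL_k|`, where `N_k` is the number of
nilpotent endomorphisms in dimension `k`. Subtracting this identity for `n - 1` from the one for
`n` and using `|GL_n| = (q^n - 1) q^(n-1) |GL_(n-1)|` gives `N_n = q^(n² - n)`.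
-/

open Module Submodule LinearMap

lemma IsCompl.eq_of_le_of_le {α : Type*} [Lattice α] [BoundedOrder α] [IsModularLattice α]
    {a b c d : α} (hab : IsCompl a b) (hcd : IsCompl c d) (hac : a ≤ c) (hbd : b ≤ d) :
    a = c :=
  eq_of_le_of_inf_le_of_sup_le hac
    (calc c ⊓ b ≤ c ⊓ d := inf_le_inf_left c hbd
      _ = ⊥ := hcd.inf_eq_bot
      _ ≤ a ⊓ b := bot_le)
    (hab.sup_eq_top ▸ le_top)

namespace FineHerstein

abbrev ComplPair (R M : Type*) [Ring R] [AddCommGroup M] [Module R M] :=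
  {p : Submodule R M × Submodule R M // IsCompl p.1 p.2}

section EndOfIsCompl

variable {R M : Type*} [Ring R] [AddCommGroup M] [Module R M] {W U : Submodule R M}

noncomputable def endOfIsCompl (hc : IsCompl W U) (g : Module.End R W) (a : Module.End R U) :
    Module.End R M :=
  ofIsCompl hc (W.subtype ∘ₗ g) (U.subtype ∘ₗ a)

@[simp]
lemma endOfIsCompl_apply_left (hc : IsCompl W U) (g : Module.End R W) (a : Module.End R U)
    (w : W) : endOfIsCompl hc g a w = g w := by
  simp [endOfIsCompl]

@[simp]
lemma endOfIsCompl_apply_right (hc : IsCompl W U) (g : Module.End R W) (a : Module.End R U)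
    (u : U) : endOfIsCompl hc g a u = a u := by
  simp [endOfIsCompl]

lemma endOfIsCompl_restrict (hc : IsCompl W U) (f : Module.End R M)
    (hW : ∀ x ∈ W, f x ∈ W) (hU : ∀ x ∈ U, f x ∈ U) :
    endOfIsCompl hc (f.restrict hW) (f.restrict hU) = f :=
  ofIsCompl_eq hc (fun _ => rfl) (fun _ => rfl)

lemma endOfIsCompl_apply_mem_left (hc : IsCompl W U) (g : Module.End R W) (a : Module.End R U) :
    ∀ x ∈ W, endOfIsCompl hc g a x ∈ W := fun x hx =>
  endOfIsCompl_apply_left hc g a ⟨x, hx⟩ ▸ (g ⟨x, hx⟩).2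

lemma endOfIsCompl_apply_mem_right (hc : IsCompl W U) (g : Module.End R W) (a : Module.End R U) :
    ∀ x ∈ U, endOfIsCompl hc g a x ∈ U := fun x hx =>
  endOfIsCompl_apply_right hc g a ⟨x, hx⟩ ▸ (a ⟨x, hx⟩).2

@[simp]
lemma restrict_endOfIsCompl_left (hc : IsCompl W U) (g : Module.End R W) (a : Module.End R U) :
    (endOfIsCompl hc g a).restrict (endOfIsCompl_apply_mem_left hc g a) = g := by
  ext; simp

@[simp]
lemma restrict_endOfIsCompl_right (hc : IsCompl W U) (g : Module.End R W) (a : Module.End R U) :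
    (endOfIsCompl hc g a).restrict (endOfIsCompl_apply_mem_right hc g a) = a := by
  ext; simp

end EndOfIsCompl

section Fitting

variable {R M : Type*} [Ring R] [AddCommGroup M] [Module R M]

lemma coe_pow_restrict_apply (f : Module.End R M) {W : Submodule R M} (hW : ∀ x ∈ W, f x ∈ W)
    (n : ℕ) (x : W) : ((f.restrict hW ^ n) x : M) = (f ^ n) x := by
  rw [Module.End.pow_restrict, coe_restrict_apply]

lemma isNilpotent_restrict_of_le_ker_pow {f : Module.End R M} {W : Submodule R M}
    (hW : ∀ x ∈ W, f x ∈ W) {m : ℕ} (h : W ≤ ker (f ^ m)) : IsNilpotent (f.restrict hW) :=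
  ⟨m, by ext x; simpa [coe_pow_restrict_apply] using h x.2⟩

lemma isUnit_restrict_of_disjoint_ker [IsArtinian R M] {f : Module.End R M} {U : Submodule R M}
    (hU : ∀ x ∈ U, f x ∈ U) (h : Disjoint U (ker f)) : IsUnit (f.restrict hU) := by
  refine (Module.End.isUnit_iff _).mpr (IsArtinian.bijective_of_injective_endomorphism _ ?_)
  rw [← LinearMap.ker_eq_bot, eq_bot_iff]
  intro x hx
  simpa using h.le_bot ⟨x.2, by simpa [Subtype.ext_iff] using hx⟩

variable [IsNoetherian R M] [IsArtinian R M]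

noncomputable def fittingPair (f : Module.End R M) : ComplPair R M :=
  ⟨(⨆ i, ker (f ^ i), ⨅ i, range (f ^ i)), f.isCompl_iSup_ker_pow_iInf_range_pow⟩

variable (f : Module.End R M)

lemma apply_mem_fittingPair_fst : ∀ x ∈ (fittingPair f).1.1, f x ∈ (fittingPair f).1.1 := by
  obtain ⟨m, hm⟩ := Filter.eventually_atTop.mp f.eventually_iSup_ker_pow_eq
  simp only [fittingPair, hm m le_rfl, mem_ker]
  intro x hx
  rw [← Module.End.mul_apply, ← pow_succ, pow_succ', Module.End.mul_apply, hx, map_zero]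

lemma apply_mem_fittingPair_snd : ∀ x ∈ (fittingPair f).1.2, f x ∈ (fittingPair f).1.2 := by
  simp only [fittingPair, mem_iInf, mem_range]
  intro x hx i
  obtain ⟨y, rfl⟩ := hx i
  exact ⟨f y, by rw [← Module.End.mul_apply, ← pow_succ, pow_succ', Module.End.mul_apply]⟩

lemma isNilpotent_restrict_fittingPair_fst :
    IsNilpotent (f.restrict (apply_mem_fittingPair_fst f)) := by
  obtain ⟨m, hm⟩ := Filter.eventually_atTop.mp f.eventually_iSup_ker_pow_eq
  exact isNilpotent_restrict_of_le_ker_pow _ (hm m le_rfl).le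

lemma isUnit_restrict_fittingPair_snd : IsUnit (f.restrict (apply_mem_fittingPair_snd f)) := by
  refine isUnit_restrict_of_disjoint_ker _ ((fittingPair f).2.disjoint.symm.mono_right ?_)
  exact le_iSup_of_le (f := fun i => ker (f ^ i)) 1 (by rw [pow_one])

lemma fittingPair_eq_of_isCompl {W U : Submodule R M} (hc : IsCompl W U)
    (hW : ∀ x ∈ W, f x ∈ W) (hU : ∀ x ∈ U, f x ∈ U)
    (hnil : IsNilpotent (f.restrict hW)) (hunit : IsUnit (f.restrict hU)) :
    fittingPair f = ⟨(W, U), hc⟩ := by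
  have hWle : W ≤ (fittingPair f).1.1 := by
    obtain ⟨m, hm⟩ := hnil
    refine fun x hx => le_iSup (fun i => ker (f ^ i)) m ?_
    simpa [coe_pow_restrict_apply] using congr(($hm ⟨x, hx⟩ : M))
  have hUle : U ≤ (fittingPair f).1.2 := by
    refine fun x hx => mem_iInf _ |>.mpr fun i => ?_
    obtain ⟨y, hy⟩ := ((Module.End.isUnit_iff _).mp (hunit.pow i)).surjective ⟨x, hx⟩
    exact ⟨y, by simpa [coe_pow_restrict_apply] using congr(($hy : M))⟩
  exact Subtype.ext (Prod.ext (hc.eq_of_le_of_le (fittingPair f).2 hWle hUle).symm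
    (hc.symm.eq_of_le_of_le (fittingPair f).2.symm hUle hWle).symm)

lemma fittingPair_endOfIsCompl (p : ComplPair R M) {g : Module.End R p.1.1}
    {a : Module.End R p.1.2} (hg : IsNilpotent g) (ha : IsUnit a) :
    fittingPair (endOfIsCompl p.2 g a) = p :=
  fittingPair_eq_of_isCompl _ p.2 (endOfIsCompl_apply_mem_left p.2 g a)
    (endOfIsCompl_apply_mem_right p.2 g a)
    (by rwa [restrict_endOfIsCompl_left]) (by rwa [restrict_endOfIsCompl_right])

theorem bijective_endOfIsCompl :
    Function.Bijective fun x : Σ p : ComplPair R M,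
        {g : Module.End R p.1.1 // IsNilpotent g} × (Module.End R p.1.2)ˣ =>
      endOfIsCompl x.1.2 x.2.1.1 x.2.2 := by
  constructor
  · rintro ⟨p, g, a⟩ ⟨p', g', a'⟩ h
    dsimp only at h
    obtain rfl : p = p' := by
      rw [← fittingPair_endOfIsCompl p g.2 a.isUnit, h,
        fittingPair_endOfIsCompl p' g'.2 a'.isUnit]
    have hg : g = g' := Subtype.ext <| LinearMap.ext fun w => Subtype.ext <| by
      simpa using congr($h w)
    have ha : a = a' := Units.ext <| LinearMap.ext fun u => Subtype.ext <| by
      simpa using congr($h u)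
    rw [hg, ha]
  · intro f
    exact ⟨⟨fittingPair f, ⟨_, isNilpotent_restrict_fittingPair_fst f⟩,
      (isUnit_restrict_fittingPair_snd f).unit⟩,
      endOfIsCompl_restrict _ f (apply_mem_fittingPair_fst f) (apply_mem_fittingPair_snd f)⟩

end Fitting

section Bases

variable {R M : Type*} [Ring R] [AddCommGroup M] [Module R M] {ι κ : Type*}

lemma span_range_subtype_comp {W : Submodule R M} (b : Basis ι R W) :
    span R (Set.range (W.subtype ∘ b)) = W := by
  rw [Set.range_comp, span_image, b.span_eq, map_subtype_top]

lemma isCompl_span_range_inl_inr (b : Basis (ι ⊕ κ) R M) :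
    IsCompl (span R (Set.range (b ∘ Sum.inl))) (span R (Set.range (b ∘ Sum.inr))) := by
  rw [Set.range_comp, Set.range_comp]
  exact b.linearIndependent.isCompl_span_image b.span_eq Set.isCompl_range_inl_range_inr

@[simp]
lemma prod_map_prodEquivOfIsCompl_inl {W U : Submodule R M} (hc : IsCompl W U) (b : Basis ι R W)
    (c : Basis κ R U) (i : ι) : (b.prod c).map (prodEquivOfIsCompl W U hc) (Sum.inl i) = b i := by
  simp

@[simp]
lemma prod_map_prodEquivOfIsCompl_inr {W U : Submodule R M} (hc : IsCompl W U) (b : Basis ι R W)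
    (c : Basis κ R U) (j : κ) : (b.prod c).map (prodEquivOfIsCompl W U hc) (Sum.inr j) = c j := by
  simp

theorem bijective_basis_prod_map :
    Function.Bijective fun x : Σ p : ComplPair R M, Basis ι R p.1.1 × Basis κ R p.1.2 =>
      (x.2.1.prod x.2.2).map (prodEquivOfIsCompl _ _ x.1.2) := by
  constructor
  · rintro ⟨p, b, c⟩ ⟨p', b', c'⟩ h
    dsimp only at h
    have h' := congr(⇑$h)
    obtain rfl : p = p' := by
      refine Subtype.ext (Prod.ext ?_ ?_)
      · rw [← span_range_subtype_comp b, ← span_range_subtype_comp b']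
        congr 2
        ext i
        simpa using congrFun h' (Sum.inl i)
      · rw [← span_range_subtype_comp c, ← span_range_subtype_comp c']
        congr 2
        ext j
        simpa using congrFun h' (Sum.inr j)
    have hb : b = b' := Basis.eq_of_apply_eq fun i => Subtype.ext <| by
      simpa using congrFun h' (Sum.inl i)
    have hc : c = c' := Basis.eq_of_apply_eq fun j => Subtype.ext <| by
      simpa using congrFun h' (Sum.inr j)
    rw [hb, hc]
  · intro b
    refine ⟨⟨⟨(span R (Set.range (b ∘ Sum.inl)), span R (Set.range (b ∘ Sum.inr))),
      isCompl_span_range_inl_inr b⟩,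
      Basis.span (b.linearIndependent.comp _ Sum.inl_injective),
      Basis.span (b.linearIndependent.comp _ Sum.inr_injective)⟩, ?_⟩
    refine Basis.eq_of_apply_eq ?_
    rintro (i | j) <;> simp only [prod_map_prodEquivOfIsCompl_inl, prod_map_prodEquivOfIsCompl_inr,
      Basis.span_apply, Function.comp_apply]

end Bases

section Counting

variable {K V : Type*} [Field K] [AddCommGroup V] [Module K V]

def glCard (q n : ℕ) : ℕ := ∏ i : Fin n, (q ^ n - q ^ (i : ℕ))

variable (K) in
noncomputable def nilCard (n : ℕ) : ℕ :=
  Nat.card {f : Module.End K (Fin n → K) // IsNilpotent f}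

lemma card_basis_eq_zero {ι : Type*} [Fintype ι] (h : Fintype.card ι ≠ finrank K V) :
    Nat.card (Basis ι K V) = 0 :=
  have : IsEmpty (Basis ι K V) := ⟨fun b => h (finrank_eq_card_basis b).symm⟩
  Nat.card_of_isEmpty

variable [FiniteDimensional K V]

lemma card_isNilpotent :
    Nat.card {f : Module.End K V // IsNilpotent f} = nilCard K (finrank K V) := by
  let e := (LinearEquiv.ofFinrankEq V (Fin (finrank K V) → K)
    (finrank_fin_fun K).symm).conjAlgEquiv K
  refine Nat.card_congr (e.toEquiv.subtypeEquiv fun f => ⟨fun h => h.map e, fun h => ?_⟩)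
  simpa using h.map e.symm

variable [Fintype K]

noncomputable instance : Fintype (ComplPair K V) :=
  have := Module.finite_of_finite K (M := V)
  Fintype.ofFinite _

lemma card_basis {ι : Type*} [Fintype ι] (h : Fintype.card ι = finrank K V) :
    Nat.card (Basis ι K V) = glCard (Fintype.card K) (finrank K V) := by
  have := Module.finite_of_finite K (M := V)
  let e : ι ≃ Fin (finrank K V) := Fintype.equivOfCardEq (h.trans (Fintype.card_fin _).symm)
  have hli : Basis ι K V ≃ {s : Fin (finrank K V) → V // LinearIndependent K s} :=
    { toFun b := ⟨b ∘ e.symm, (linearIndependent_equiv e.symm).mpr b.linearIndependent⟩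
      invFun s := basisOfLinearIndependentOfCardEqFinrank' (s.1 ∘ e)
        ((linearIndependent_equiv e).mpr s.2) h
      left_inv b := Basis.eq_of_apply_eq fun i => by simp
      right_inv s := Subtype.ext <| funext fun i => by simp }
  rw [Nat.card_congr hli, card_linearIndependent le_rfl, glCard]

lemma card_units_end :
    Nat.card (Module.End K V)ˣ = glCard (Fintype.card K) (finrank K V) := by
  rw [Nat.card_congr (Units.mapEquiv (algEquivMatrix (finBasis K V)).toMulEquiv).toEquiv]
  exact Matrix.card_GL_field _

lemma card_end : Nat.card (Module.End K V) = Fintype.card K ^ (finrank K V * finrank K V) := by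
  rw [Module.natCard_eq_pow_finrank (K := K), Module.finrank_linearMap, Nat.card_eq_fintype_card]

lemma card_end_eq_sum : Fintype.card K ^ (finrank K V * finrank K V) =
    ∑ p : ComplPair K V,
      nilCard K (finrank K p.1.1) * glCard (Fintype.card K) (finrank K p.1.2) := by
  have := Module.finite_of_finite K (M := V)
  have (W : Submodule K V) : Finite (Module.End K W) := Module.finite_of_finite K
  rw [← card_end, ← Nat.card_eq_of_bijective _ bijective_endOfIsCompl, Nat.card_sigma]
  simp only [Nat.card_prod, card_isNilpotent, card_units_end]

open Finset in
lemma card_filter_finrank_mul {k l : ℕ} (h : k + l = finrank K V) :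
    #{p : ComplPair K V | finrank K p.1.1 = k} *
      (glCard (Fintype.card K) k * glCard (Fintype.card K) l) =
      glCard (Fintype.card K) (finrank K V) := by
  have := Module.finite_of_finite K (M := V)
  have (W : Submodule K V) (ι : Type) [Finite ι] : Finite (Basis ι K W) :=
    Finite.of_injective _ DFunLike.coe_injective
  rw [← card_basis (ι := Fin k ⊕ Fin l) (by simp [h]),
    ← Nat.card_eq_of_bijective _ bijective_basis_prod_map, Nat.card_sigma, card_filter, sum_mul]
  refine sum_congr rfl fun p _ => ?_
  have hp := Submodule.finrank_add_eq_of_isCompl p.2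
  split_ifs with hk
  · have hl : finrank K p.1.2 = l := by omega
    rw [Nat.card_prod, card_basis (by simp [hk]), card_basis (by simp [hl]), hk, hl, one_mul]
  · rw [Nat.card_prod, card_basis_eq_zero (by simpa using Ne.symm hk), zero_mul, zero_mul]

open Finset in
lemma sum_complPair_eq_sum_range {A : Type*} [AddCommMonoid A] (f : ℕ → ℕ → A) :
    ∑ p : ComplPair K V, f (finrank K p.1.1) (finrank K p.1.2) =
      ∑ k ∈ range (finrank K V + 1),
        #{p : ComplPair K V | finrank K p.1.1 = k} • f k (finrank K V - k) := by
  rw [← sum_fiberwise_of_maps_to (g := fun p : ComplPair K V => finrank K p.1.1)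
    fun p _ => mem_range.mpr (Nat.lt_succ_of_le (Submodule.finrank_le _))]
  refine sum_congr rfl fun k _ => ?_
  rw [← sum_const]
  refine sum_congr rfl fun p hp => ?_
  have := Submodule.finrank_add_eq_of_isCompl p.2
  rw [(mem_filter.mp hp).2] at this ⊢
  congr
  omega

end Counting

lemma glCard_pos {q : ℕ} (hq : 1 < q) (n : ℕ) : 0 < glCard q n :=
  Finset.prod_pos fun i _ => Nat.sub_pos_of_lt (Nat.pow_lt_pow_right hq i.2)

lemma glCard_succ (q n : ℕ) : glCard q (n + 1) = (q ^ (n + 1) - 1) * (q ^ n * glCard q n) := by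
  have (i : ℕ) : q ^ (n + 1) - q ^ (i + 1) = q * (q ^ n - q ^ i) := by
    rw [Nat.mul_sub, pow_succ', pow_succ']
  simp only [glCard, Fin.prod_univ_succ, Fin.val_zero, pow_zero, Fin.val_succ, this,
    Finset.prod_mul_distrib, Finset.prod_const, Finset.card_univ, Fintype.card_fin]

open Finset in
theorem sum_range_nilCard_div_glCard (K : Type*) [Field K] [Fintype K] (n : ℕ) :
    ∑ k ∈ range (n + 1), (nilCard K k : ℚ) / glCard (Fintype.card K) k =
      (Fintype.card K : ℚ) ^ (n * n) / glCard (Fintype.card K) n := by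
  have hG (k : ℕ) : (glCard (Fintype.card K) k : ℚ) ≠ 0 := by
    exact_mod_cast (glCard_pos Fintype.one_lt_card k).ne'
  have hsum : (Fintype.card K : ℚ) ^ (n * n) = ∑ k ∈ range (n + 1),
      (#{p : ComplPair K (Fin n → K) | finrank K p.1.1 = k} : ℚ) *
        (nilCard K k * glCard (Fintype.card K) (n - k)) := by
    have := card_end_eq_sum (K := K) (V := Fin n → K)
    rw [sum_complPair_eq_sum_range (fun a b => nilCard K a * glCard (Fintype.card K) b),
      finrank_fin_fun] at this
    simp only [smul_eq_mul] at this
    exact_mod_cast this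
  rw [eq_div_iff (hG n), sum_mul, hsum]
  refine sum_congr rfl fun k hk => ?_
  have hcount := card_filter_finrank_mul (K := K) (V := Fin n → K) (k := k) (l := n - k)
    (by rw [finrank_fin_fun]; have := mem_range.mp hk; omega)
  rw [finrank_fin_fun] at hcount
  rw [← hcount, div_mul_eq_mul_div, div_eq_iff (hG k)]
  push_cast
  ring

theorem nilCard_mul_pow (K : Type*) [Field K] [Fintype K] (n : ℕ) :
    nilCard K n * Fintype.card K ^ n = Fintype.card K ^ (n * n) := by
  have hS := sum_range_nilCard_div_glCard K
  rcases n with _ | m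
  · simpa [glCard] using hS 0
  · have h := hS (m + 1)
    rw [Finset.sum_range_succ, hS m, glCard_succ] at h
    have hG : (glCard (Fintype.card K) m : ℚ) ≠ 0 := by
      exact_mod_cast (glCard_pos Fintype.one_lt_card m).ne'
    have h1 : 1 ≤ Fintype.card K ^ (m + 1) := Nat.one_le_pow _ _ Fintype.card_pos
    push_cast [Nat.cast_sub h1] at h
    have hq1 : (Fintype.card K : ℚ) ^ (m + 1) - 1 ≠ 0 :=
      sub_ne_zero.mpr (one_lt_pow₀ (by exact_mod_cast Fintype.one_lt_card) m.succ_ne_zero).ne'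
    field_simp at h
    qify
    linear_combination (Fintype.card K : ℚ) ^ (m + 1) * h

end FineHerstein

theorem stmt_19 (K : Type*) [Field K] [Fintype K] (q : ℕ) (hq : Fintype.card K = q)
    (X : Type*) [AddCommGroup X] [Module K X] [FiniteDimensional K X]
    (n : ℕ) (hn : Module.finrank K X = n) :
    Nat.card {T : Module.End K X // IsNilpotent T} * q ^ n = q ^ (n ^ 2) := by
  subst hq hn
  rw [FineHerstein.card_isNilpotent, sq]
  exact FineHerstein.nilCard_mul_pow K _
end
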